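/- arXiv:1410.8010 — 5 statements merged into one kernel-verified Lean document; each statement's English description precedes it below -/
import Mathlib

section
/- For complex s with 0 < Re(s) < 1/2, the Mellin transform identity holds: (1/Γ(s)) ∫₀^∞ e^{-2t} I₀(2t) t^{s-1} dt = 4^{-s} π^{-1/2} Γ(1/2 - s) / Γ(1 - s), where I₀ is the modified Bessel function of the first kind of order 0. -/
/-! Since `I₀(x) = π⁻¹ ∫₀^π e^{x cos θ} dθ`, the substitution `x = (1 - cos θ) / 2` writes
`e^{-2t} I₀(2t) = ∫₀¹ e^{-4xt} dx / (π √(x (1 - x)))` as the Laplace transform at `4t` of the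
arcsine law. Exchanging the two integrals, the Mellin transform of a Laplace transform is `Γ(s)`
times the `(-s)`-th moment of the measure, here `4^{-s} π⁻¹ B(1/2 - s, 1/2)`, which is finite
exactly when `Re s < 1/2`; finally `B(1/2 - s, 1/2) = √π Γ(1/2 - s) / Γ(1 - s)`. -/

open Real Complex MeasureTheory

/-- Modified Bessel function of the first kind of order 0. -/
noncomputable def besselI0 (x : ℝ) : ℝ := ∑' m : ℕ, (x / 2) ^ (2 * m) / (Nat.factorial m) ^ 2

open Set
open scoped Nat

theorem integral_cos_pow_odd (m : ℕ) : ∫ θ in 0..π, Real.cos θ ^ (2 * m + 1) = 0 := by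
  induction m with
  | zero => simp
  | succ m ih => rw [show 2 * (m + 1) + 1 = 2 * m + 1 + 2 by ring, integral_cos_pow, ih]; simp

theorem integral_cos_pow_even (m : ℕ) :
    ∫ θ in 0..π, Real.cos θ ^ (2 * m) = π * (2 * m)! / (4 ^ m * m ! ^ 2) := by
  induction m with
  | zero => simp
  | succ m ih =>
    rw [show 2 * (m + 1) = 2 * m + 2 by ring, integral_cos_pow, ih, Nat.factorial_succ,
      Nat.factorial_succ, Nat.factorial_succ]
    simp only [Real.sin_pi, Real.sin_zero, mul_zero, sub_zero, zero_div, zero_add]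
    push_cast
    field_simp
    ring

theorem integral_exp_mul_cos_eq_tsum (x : ℝ) :
    ∫ θ in 0..π, rexp (x * Real.cos θ) = ∑' n : ℕ, x ^ n / n ! * ∫ θ in 0..π, Real.cos θ ^ n := by
  let term (n : ℕ) : C(ℝ, ℝ) := ⟨fun θ ↦ (x * Real.cos θ) ^ n / n !, by fun_prop⟩
  have hsum : Summable fun n ↦
      ‖(term n).restrict (⟨uIcc 0 π, isCompact_uIcc⟩ : TopologicalSpace.Compacts ℝ)‖ := by
    refine (Real.summable_pow_div_factorial |x|).of_nonneg_of_le (fun _ ↦ norm_nonneg _)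
      fun n ↦ (ContinuousMap.norm_le _ (by positivity)).2 fun θ ↦ ?_
    simp only [ContinuousMap.restrict_apply, ContinuousMap.coe_mk, term, norm_div, norm_pow,
      norm_mul, Real.norm_eq_abs, abs_of_nonneg (Nat.cast_nonneg _ : (0 : ℝ) ≤ n !)]
    gcongr
    exact mul_le_of_le_one_right (abs_nonneg x) (Real.abs_cos_le_one _)
  calc ∫ θ in 0..π, rexp (x * Real.cos θ)
      = ∫ θ in 0..π, ∑' n, term n θ := by
        simp only [term, ContinuousMap.coe_mk, Real.exp_eq_exp_ℝ, NormedSpace.exp_eq_tsum_div]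
    _ = ∑' n, ∫ θ in 0..π, term n θ :=
        (intervalIntegral.tsum_intervalIntegral_eq_of_summable_norm hsum).symm
    _ = _ := by
        congr 1 with n
        rw [← intervalIntegral.integral_const_mul]
        congr 1 with θ
        simp only [term, ContinuousMap.coe_mk]
        ring

theorem integral_exp_mul_cos_eq_pi_mul_besselI0 (x : ℝ) :
    ∫ θ in 0..π, rexp (x * Real.cos θ) = π * besselI0 x := by
  rw [integral_exp_mul_cos_eq_tsum, besselI0, ← tsum_mul_left]
  have h_odd : ∀ n, Odd n → x ^ n / n ! * ∫ θ in 0..π, Real.cos θ ^ n = 0 := by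
    rintro n ⟨m, rfl⟩
    rw [integral_cos_pow_odd, mul_zero]
  rw [← (mul_right_injective₀ two_ne_zero).tsum_eq]
  · congr 1 with m
    rw [integral_cos_pow_even, div_pow, pow_mul 2, show (2 : ℝ) ^ 2 = 4 by norm_num]
    field_simp
  · intro n hn
    obtain ⟨m, rfl⟩ := (Nat.not_odd_iff_even.mp fun h ↦ hn (h_odd n h)).two_dvd
    exact ⟨m, rfl⟩

theorem image_one_sub_cos_div_two_Ioo :
    (fun θ ↦ (1 - Real.cos θ) / 2) '' Ioo 0 π = Ioo 0 1 := by
  ext x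
  constructor
  · rintro ⟨θ, hθ, rfl⟩
    have hlt : Real.cos θ < Real.cos 0 :=
      Real.strictAntiOn_cos ⟨le_rfl, pi_pos.le⟩ (Ioo_subset_Icc_self hθ) hθ.1
    have hgt : Real.cos π < Real.cos θ :=
      Real.strictAntiOn_cos (Ioo_subset_Icc_self hθ) ⟨pi_pos.le, le_rfl⟩ hθ.2
    rw [Real.cos_zero] at hlt
    rw [Real.cos_pi] at hgt
    constructor <;> linarith
  · rintro ⟨hx₀, hx₁⟩
    refine ⟨Real.arccos (1 - 2 * x), ⟨Real.arccos_pos.2 (by linarith),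
      Real.arccos_lt_pi.2 (by linarith)⟩, ?_⟩
    simp only [Real.cos_arccos (by linarith : -1 ≤ 1 - 2 * x) (by linarith)]
    ring

theorem integral_Ioo_comp_one_sub_cos_div_two {E : Type*} [NormedAddCommGroup E]
    [NormedSpace ℝ E] (f : ℝ → E) :
    ∫ θ in Ioo 0 π, f ((1 - Real.cos θ) / 2) = ∫ x in Ioo 0 1, (√(x * (1 - x)))⁻¹ • f x := by
  have hderiv : ∀ θ ∈ Ioo 0 π, HasDerivWithinAt (fun θ ↦ (1 - Real.cos θ) / 2)
      (Real.sin θ / 2) (Ioo 0 π) θ := fun θ _ ↦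
    (((hasDerivAt_const θ 1).sub (Real.hasDerivAt_cos θ)).div_const 2).hasDerivWithinAt.congr_deriv
      (by ring)
  have hinj : InjOn (fun θ ↦ (1 - Real.cos θ) / 2) (Ioo 0 π) := fun a ha b hb hab ↦
    Real.injOn_cos (Ioo_subset_Icc_self ha) (Ioo_subset_Icc_self hb) (by linarith [hab])
  rw [← image_one_sub_cos_div_two_Ioo,
    integral_image_eq_integral_abs_deriv_smul measurableSet_Ioo hderiv hinj]
  refine setIntegral_congr_fun measurableSet_Ioo fun θ hθ ↦ ?_
  have hsin : 0 < Real.sin θ := Real.sin_pos_of_pos_of_lt_pi hθ.1 hθ.2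
  have hsqrt : √((1 - Real.cos θ) / 2 * (1 - (1 - Real.cos θ) / 2)) = Real.sin θ / 2 := by
    rw [← Real.sqrt_sq (by positivity : 0 ≤ Real.sin θ / 2)]
    congr 1
    linear_combination (-1 / 4 : ℝ) * Real.sin_sq_add_cos_sq θ
  rw [hsqrt, smul_smul, abs_of_pos (by positivity), mul_inv_cancel₀ (by positivity), one_smul]

noncomputable def arcsineDensity (x : ℝ) : ℝ := (π * √(x * (1 - x)))⁻¹

theorem exp_neg_mul_besselI0_eq_integral_arcsineDensity (t : ℝ) :
    rexp (-t) * besselI0 t = ∫ x in Ioo 0 1, arcsineDensity x * rexp (-(2 * x) * t) := by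
  calc rexp (-t) * besselI0 t = π⁻¹ * (rexp (-t) * ∫ θ in 0..π, rexp (t * Real.cos θ)) := by
        rw [integral_exp_mul_cos_eq_pi_mul_besselI0]
        field_simp
    _ = π⁻¹ * ∫ θ in Ioo 0 π, rexp (-(2 * ((1 - Real.cos θ) / 2)) * t) := by
        rw [intervalIntegral.integral_of_le pi_pos.le, integral_Ioc_eq_integral_Ioo,
          ← integral_const_mul]
        congr 2 with θ
        rw [← Real.exp_add]
        ring_nf
    _ = π⁻¹ * ∫ x in Ioo 0 1, (√(x * (1 - x)))⁻¹ • rexp (-(2 * x) * t) := by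
        rw [integral_Ioo_comp_one_sub_cos_div_two fun x ↦ rexp (-(2 * x) * t)]
    _ = _ := by
        rw [← integral_const_mul]
        congr 1 with x
        rw [smul_eq_mul, arcsineDensity, mul_inv]
        ring

theorem integrableOn_cpow_mul_exp_neg_mul_Ioi {s : ℂ} (hs : 0 < s.re) {p : ℝ} (hp : 0 < p) :
    IntegrableOn (fun t : ℝ ↦ (t : ℂ) ^ (s - 1) * rexp (-p * t)) (Ioi 0) := by
  have hΓ := Complex.GammaIntegral_convergent hs
  rw [← mul_zero p, ← integrableOn_Ioi_comp_mul_left_iff _ _ hp] at hΓ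
  refine IntegrableOn.congr_fun (hΓ.const_mul (1 / (p : ℂ) ^ (s - 1)))
    (fun t (ht : 0 < t) ↦ ?_) measurableSet_Ioi
  have hps : (p : ℂ) ^ (s - 1) ≠ 0 := by
    rw [Ne, cpow_eq_zero_iff, not_and_or]
    exact Or.inl (ofReal_ne_zero.mpr hp.ne')
  simp only [ofReal_mul, mul_cpow_ofReal_nonneg hp.le ht.le, ofReal_exp, neg_mul]
  field_simp

theorem integral_cpow_mul_ofReal_exp_neg_mul_Ioi {s : ℂ} (hs : 0 < s.re) {p : ℝ} (hp : 0 < p) :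
    ∫ t : ℝ in Ioi 0, (t : ℂ) ^ (s - 1) * rexp (-p * t) = Gamma s / (p : ℂ) ^ s := by
  have hΓ := integral_cpow_mul_exp_neg_mul_Ioi hs hp
  simp_rw [← ofReal_mul, ← ofReal_neg, ← ofReal_exp, ← neg_mul p] at hΓ
  rw [hΓ, one_div, inv_cpow _ _ (arg_ofReal_of_nonneg hp.le ▸ pi_pos.ne), div_eq_inv_mul,
    mul_comm]

theorem integral_norm_cpow_mul_exp_neg_mul_Ioi {s : ℂ} (hs : 0 < s.re) {p : ℝ} (hp : 0 < p) :
    ∫ t : ℝ in Ioi 0, ‖(t : ℂ) ^ (s - 1) * rexp (-p * t)‖ = Real.Gamma s.re / p ^ s.re := by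
  have hΓ := Real.integral_rpow_mul_exp_neg_mul_Ioi hs hp
  simp_rw [← neg_mul p, one_div, inv_rpow hp.le, ← div_eq_inv_mul] at hΓ
  rw [← hΓ]
  refine setIntegral_congr_fun measurableSet_Ioi fun t ht ↦ ?_
  rw [norm_mul, norm_real, Real.norm_eq_abs, Real.abs_exp, norm_cpow_eq_rpow_re_of_pos ht,
    sub_re, one_re]

theorem mellin_integral_exp_neg_mul {α : Type*} [MeasurableSpace α] {μ : Measure α} [SFinite μ]
    {g : α → ℂ} {p : α → ℝ} {s : ℂ} (hs : 0 < s.re) (hg : AEStronglyMeasurable g μ)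
    (hp_meas : Measurable p) (hp : ∀ᵐ x ∂μ, 0 < p x)
    (hint : Integrable (fun x ↦ g x / p x ^ s) μ) :
    mellin (fun t ↦ ∫ x, g x * rexp (-p x * t) ∂μ) s = Gamma s * ∫ x, g x / p x ^ s ∂μ := by
  set F : α → ℝ → ℂ := fun x t ↦ g x * ((t : ℂ) ^ (s - 1) * rexp (-p x * t)) with hF
  have hF_meas : AEStronglyMeasurable (Function.uncurry F) (μ.prod (volume.restrict (Ioi 0))) :=
    hg.comp_fst.mul (by fun_prop : Measurable fun q : α × ℝ ↦
      ((q.2 : ℂ) ^ (s - 1) * rexp (-p q.1 * q.2))).aestronglyMeasurable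
  have hF_int : Integrable (Function.uncurry F) (μ.prod (volume.restrict (Ioi 0))) := by
    refine (integrable_prod_iff hF_meas).2 ⟨?_, ?_⟩
    · filter_upwards [hp] with x hx
      exact (integrableOn_cpow_mul_exp_neg_mul_Ioi hs hx).const_mul (g x)
    · refine (hint.norm.const_mul (Real.Gamma s.re)).congr ?_
      filter_upwards [hp] with x hx
      simp only [Function.uncurry_apply_pair, hF, norm_mul (g x)]
      rw [integral_const_mul, integral_norm_cpow_mul_exp_neg_mul_Ioi hs hx, norm_div,
        norm_cpow_eq_rpow_re_of_pos hx]
      ring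
  calc mellin (fun t ↦ ∫ x, g x * rexp (-p x * t) ∂μ) s
      = ∫ t in Ioi 0, ∫ x, F x t ∂μ := by
        refine setIntegral_congr_fun measurableSet_Ioi fun t _ ↦ ?_
        rw [smul_eq_mul, ← integral_const_mul]
        congr 1 with x
        ring
    _ = ∫ x, (∫ t in Ioi 0, F x t) ∂μ := (integral_integral_swap hF_int).symm
    _ = ∫ x, Gamma s * (g x / p x ^ s) ∂μ := by
        refine integral_congr_ae ?_
        filter_upwards [hp] with x hx
        rw [hF, integral_const_mul, integral_cpow_mul_ofReal_exp_neg_mul_Ioi hs hx]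
        ring
    _ = Gamma s * ∫ x, g x / p x ^ s ∂μ := integral_const_mul _ _

theorem Complex.betaIntegral_eq_integral_Ioo (u v : ℂ) :
    betaIntegral u v = ∫ x in Ioo (0 : ℝ) 1, (x : ℂ) ^ (u - 1) * (1 - (x : ℂ)) ^ (v - 1) := by
  rw [betaIntegral, intervalIntegral.integral_of_le zero_le_one, integral_Ioc_eq_integral_Ioo]

theorem arcsineDensity_div_cpow_eq {x : ℝ} (hx : x ∈ Ioo (0 : ℝ) 1) (s : ℂ) :
    (arcsineDensity x : ℂ) / ((4 * x : ℝ) : ℂ) ^ s =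
      (π : ℂ)⁻¹ * (4 : ℂ) ^ (-s) *
        ((x : ℂ) ^ ((1 / 2 - s) - 1) * (1 - (x : ℂ)) ^ ((1 / 2 : ℂ) - 1)) := by
  obtain ⟨hx₀, hx₁⟩ := hx
  have hinv_sqrt : ∀ y : ℝ, 0 < y → (((√y)⁻¹ : ℝ) : ℂ) = (y : ℂ) ^ (-(1 / 2) : ℂ) := by
    intro y hy
    rw [ofReal_inv, Real.sqrt_eq_rpow, ofReal_cpow hy.le, cpow_neg]
    norm_num
  have hx' : (x : ℂ) ≠ 0 := ofReal_ne_zero.mpr hx₀.ne'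
  have h4x : ((4 * x : ℝ) : ℂ) ^ s = 4 ^ s * (x : ℂ) ^ s := by
    rw [ofReal_mul, mul_cpow_ofReal_nonneg (by norm_num) hx₀.le]
    norm_num
  have hx_pow : (x : ℂ) ^ ((1 / 2 - s) - 1) = (x : ℂ) ^ (-(1 / 2) : ℂ) / (x : ℂ) ^ s := by
    rw [← cpow_sub _ _ hx']
    ring_nf
  have h1x_pow : (1 - (x : ℂ)) ^ ((1 / 2 : ℂ) - 1) = ((1 - x : ℝ) : ℂ) ^ (-(1 / 2) : ℂ) := by
    push_cast
    norm_num
  rw [arcsineDensity, h4x, hx_pow, h1x_pow, Real.sqrt_mul hx₀.le, mul_inv, mul_inv, ofReal_mul,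
    ofReal_mul, hinv_sqrt x hx₀, hinv_sqrt (1 - x) (by linarith), cpow_neg 4 s, ofReal_inv]
  ring

theorem integrableOn_arcsineDensity_div_cpow {s : ℂ} (hs : s.re < 1 / 2) :
    IntegrableOn (fun x : ℝ ↦ (arcsineDensity x : ℂ) / ((4 * x : ℝ) : ℂ) ^ s)
      (Ioo 0 1) := by
  have hu : 0 < (1 / 2 - s).re := by simpa using hs
  have hβ := ((betaIntegral_convergent hu (by norm_num : 0 < (1 / 2 : ℂ).re)).1.mono_set
    Ioo_subset_Ioc_self).const_mul ((π : ℂ)⁻¹ * (4 : ℂ) ^ (-s))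
  exact IntegrableOn.congr_fun hβ (fun x hx ↦ (arcsineDensity_div_cpow_eq hx s).symm)
    measurableSet_Ioo

theorem integral_arcsineDensity_div_cpow (s : ℂ) :
    ∫ x in Ioo (0 : ℝ) 1, (arcsineDensity x : ℂ) / ((4 * x : ℝ) : ℂ) ^ s =
      (π : ℂ)⁻¹ * (4 : ℂ) ^ (-s) * betaIntegral (1 / 2 - s) (1 / 2) := by
  rw [betaIntegral_eq_integral_Ioo, ← integral_const_mul]
  exact setIntegral_congr_fun measurableSet_Ioo fun x hx ↦ arcsineDensity_div_cpow_eq hx s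

theorem betaIntegral_sub_half_half {s : ℂ} (hs : s.re < 1 / 2) :
    betaIntegral (1 / 2 - s) (1 / 2) = Gamma (1 / 2 - s) * √π / Gamma (1 - s) := by
  have hu : 0 < (1 / 2 - s).re := by simpa using hs
  have h := Gamma_mul_Gamma_eq_betaIntegral hu (by norm_num : 0 < (1 / 2 : ℂ).re)
  rw [show 1 / 2 - s + 1 / 2 = 1 - s by ring, Complex.Gamma_one_half_eq] at h
  have hΓ : Gamma (1 - s) ≠ 0 :=
    Gamma_ne_zero_of_re_pos (by simp only [sub_re, one_re, sub_pos]; linarith)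
  have hsqrt : (π : ℂ) ^ (1 / 2 : ℂ) = √π := by
    rw [Real.sqrt_eq_rpow, ofReal_cpow pi_pos.le]
    norm_num
  rw [eq_div_iff hΓ, ← hsqrt, h]
  ring

theorem zetaZ_integral_formula (s : ℂ) (h0 : 0 < s.re) (h1 : s.re < 1 / 2) :
    (1 / Complex.Gamma s) *
        ∫ t in Set.Ioi (0 : ℝ),
          (Real.exp (-2 * t) * besselI0 (2 * t) : ℂ) * (t : ℂ) ^ (s - 1) =
      (4 : ℂ) ^ (-s) * ((Real.sqrt Real.pi : ℂ))⁻¹ *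
        Complex.Gamma (1 / 2 - s) / Complex.Gamma (1 - s) := by
  have hmellin : ∫ t in Ioi (0 : ℝ), (rexp (-2 * t) * besselI0 (2 * t) : ℂ) * (t : ℂ) ^ (s - 1) =
      mellin (fun t ↦ ∫ x in Ioo 0 1, (arcsineDensity x : ℂ) * rexp (-(4 * x) * t)) s := by
    refine setIntegral_congr_fun measurableSet_Ioi fun t _ ↦ ?_
    rw [smul_eq_mul, mul_comm, neg_mul, ← ofReal_mul,
      exp_neg_mul_besselI0_eq_integral_arcsineDensity, ← integral_complex_ofReal]
    congr 2 with x
    push_cast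
    ring_nf
  have hpos : ∀ᵐ x ∂(volume.restrict (Ioo (0 : ℝ) 1)), 0 < 4 * x := by
    filter_upwards [ae_restrict_mem measurableSet_Ioo] with x hx
    linarith [hx.1]
  rw [hmellin, mellin_integral_exp_neg_mul h0 (by unfold arcsineDensity; fun_prop) (by fun_prop)
    hpos (integrableOn_arcsineDensity_div_cpow h1), integral_arcsineDensity_div_cpow,
    betaIntegral_sub_half_half h1]
  have hΓ : Gamma s ≠ 0 := Gamma_ne_zero_of_re_pos h0
  have hπ : (√π : ℂ) ^ 2 = π := by
    rw [← ofReal_pow, Real.sq_sqrt pi_pos.le]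
  field_simp
  rw [← hπ]
  ring
end

section
/- For every natural number n ≥ 0, ζ_ℤ(-n) = binom(2n, n), i.e., 4^{n} π^{-1/2} Γ(1/2 + n)/Γ(1 + n) = (2n)!/(n!)² = the central binomial coefficient. -/
open Real

theorem zetaZ_special_value_neg_int (n : ℕ) :
    (4 : ℝ) ^ n * (Real.sqrt Real.pi)⁻¹ * Real.Gamma (1 / 2 + n) / Real.Gamma (1 + n) =
      Nat.choose (2 * n) n := by
  induction n with
  | zero =>
    have h : (1 / 2 + (0 : ℕ) : ℝ) = 1 / 2 := by norm_num
    rw [h, Real.Gamma_one_half_eq]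
    have h2 : (1 + (0 : ℕ) : ℝ) = 1 := by norm_num
    rw [h2, Real.Gamma_one]
    simp [inv_mul_cancel₀ (ne_of_gt (Real.sqrt_pos.mpr Real.pi_pos))]
  | succ n ih =>
    have h1 : Real.Gamma (1 / 2 + (n + 1 : ℕ)) = (1 / 2 + n) * Real.Gamma (1 / 2 + n) := by
      push_cast
      rw [show (1 / 2 + (n + 1) : ℝ) = (1 / 2 + n) + 1 by ring, Real.Gamma_add_one]
      positivity
    have h2 : Real.Gamma (1 + (n + 1 : ℕ)) = (1 + n) * Real.Gamma (1 + n) := by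
      push_cast
      rw [show (1 + (n + 1) : ℝ) = (1 + n) + 1 by ring, Real.Gamma_add_one]
      positivity
    have hB : ((n : ℝ) + 1) * Nat.choose (2 * (n + 1)) (n + 1) =
        2 * (2 * n + 1) * Nat.choose (2 * n) n := by
      have := Nat.succ_mul_centralBinom_succ n
      rw [Nat.centralBinom, Nat.centralBinom] at this
      exact_mod_cast congrArg (Nat.cast : ℕ → ℝ) this
    have hG : Real.Gamma (1 + n) ≠ 0 :=
      ne_of_gt (Real.Gamma_pos_of_pos (by positivity))
    have hn1 : ((1 : ℝ) + n) ≠ 0 := by positivity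
    have key : (4 : ℝ) ^ n * (Real.sqrt Real.pi)⁻¹ * Real.Gamma (1 / 2 + n) =
        Nat.choose (2 * n) n * Real.Gamma (1 + n) := by
      rw [div_eq_iff hG] at ih
      exact ih
    rw [h1, h2, div_eq_iff (mul_ne_zero hn1 hG)]
    push_cast at hB ⊢
    linear_combination 4 * (1 / 2 + (n : ℝ)) * key - Real.Gamma (1 + n) * hB
end

section
/- For every integer n ≥ 1, ζ_ℤ(-n + 1/2) = 4^{2n} / (2π n · binom(2n, n)), i.e., 4^{n-1/2} π^{-1/2} Γ(n)/Γ(1/2 + n) = 4^{2n} n! n! / (2π n (2n)!). -/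
/-!
Starting from `Γ(1/2) = √π`, the recursion `Γ(s + 1) = s Γ(s)` and
`(n + 1) C(2n+2, n+1) = 2 (2n + 1) C(2n, n)` give `4ⁿ Γ(n + 1/2) = √π n! C(2n, n)` by induction.
Together with `Γ(n) = (n - 1)!` and `4^(n - 1/2) = 4ⁿ / 2`, the identity becomes a rational one.
-/

open Real Nat

theorem Real.Gamma_nat_add_half_mul_four_pow (n : ℕ) :
    Gamma (n + 1 / 2) * 4 ^ n = √π * n ! * n.centralBinom := by
  induction n with
  | zero => simp [← Gamma_one_half_eq]
  | succ n ih =>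
    have hrec : ((n + 1 : ℕ) : ℝ) * (n + 1).centralBinom = 2 * (2 * n + 1) * n.centralBinom := by
      exact_mod_cast succ_mul_centralBinom_succ n
    rw [Nat.cast_succ, add_right_comm, Gamma_add_one (by positivity), factorial_succ]
    push_cast at hrec ⊢
    linear_combination (2 * (2 * n + 1)) * ih - √π * n ! * hrec

theorem Real.Gamma_nat_add_half_eq_centralBinom (n : ℕ) :
    Gamma (n + 1 / 2) = √π * n ! * n.centralBinom / 4 ^ n := by
  rw [← Gamma_nat_add_half_mul_four_pow, mul_div_cancel_right₀ _ (by positivity)]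

theorem Real.four_rpow_natCast_sub_half (n : ℕ) : (4 : ℝ) ^ ((n : ℝ) - 1 / 2) = 4 ^ n / 2 := by
  rw [rpow_sub (by norm_num), rpow_natCast, ← sqrt_eq_rpow,
    show (4 : ℝ) = 2 ^ 2 by norm_num, sqrt_sq zero_le_two]

theorem zetaZ_special_value_neg_half_int_general (n : ℕ) :
    (4 : ℝ) ^ ((n : ℝ) - 1 / 2) * (Real.sqrt Real.pi)⁻¹ *
        Real.Gamma n / Real.Gamma (1 / 2 + n) =
      (4 : ℝ) ^ (2 * n) / (2 * Real.pi * n * Nat.choose (2 * n) n) := by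
  cases n with
  -- both sides are `0`: `Γ(0) = 0` in Mathlib, and the right side divides by `0`
  | zero => simp
  | succ n =>
    have hΓ : Gamma ((n + 1 : ℕ) : ℝ) = n ! := by rw [Nat.cast_succ, Gamma_nat_eq_factorial]
    rw [four_rpow_natCast_sub_half, hΓ, add_comm (1 / 2 : ℝ), Gamma_nat_add_half_eq_centralBinom,
      ← centralBinom_eq_two_mul_choose, factorial_succ]
    field_simp
    rw [sq_sqrt pi_pos.le]
    push_cast
    ring

theorem zetaZ_special_value_neg_half_int (n : ℕ) (hn : 1 ≤ n) :
    (4 : ℝ) ^ ((n : ℝ) - 1 / 2) * (Real.sqrt Real.pi)⁻¹ *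
        Real.Gamma n / Real.Gamma (1 / 2 + n) =
      (4 : ℝ) ^ (2 * n) / (2 * Real.pi * n * Nat.choose (2 * n) n) :=
  zetaZ_special_value_neg_half_int_general n
end

section
/- For every integer n ≥ 2, the sum over k = 1 to n−1 of 1/sin²(πk/n) equals (n² − 1)/3. -/
open Real Finset

/-!
Put `x = ζ ^ k` with `ζ = exp (2πi/n)`. Then `(1 - x) * (1 - x⁻¹) = ‖1 - x‖ ^ 2 = 4 sin² (πk/n)`.
For `x ≠ 1` with `x ^ n = 1`, the polynomial `A(x) = ∑_{j<n} j x^j` satisfies `(1 - x) A(x) = -n`,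
so `((1 - x) * (1 - x⁻¹))⁻¹ = A(x) A(x⁻¹) / n²`. Summed over all `n`-th roots of unity,
`A(x) A(x⁻¹)` gives `n ∑ j²` by orthogonality (discrete Parseval); removing the term `x = 1`,
which is `(∑ j)²`, leaves `n² (n² - 1) / 12`.
-/

theorem sum_range_natCast_mul_two {R : Type*} [CommRing R] (n : ℕ) :
    (∑ j ∈ range n, (j : R)) * 2 = n * (n - 1) := by
  induction n with
  | zero => simp
  | succ n ih => rw [sum_range_succ, add_mul, ih]; push_cast; ring

theorem sum_range_natCast_sq_mul_six {R : Type*} [CommRing R] (n : ℕ) :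
    (∑ j ∈ range n, (j : R) ^ 2) * 6 = n * (n - 1) * (2 * n - 1) := by
  induction n with
  | zero => simp
  | succ n ih => rw [sum_range_succ, add_mul, ih]; push_cast; ring

theorem one_sub_mul_sum_range_natCast_mul_pow {R : Type*} [CommRing R] (x : R) (n : ℕ) :
    (1 - x) * ∑ j ∈ range n, (j : R) * x ^ j = x * ∑ j ∈ range n, x ^ j - n * x ^ n := by
  induction n with
  | zero => simp
  | succ n ih => simp only [sum_range_succ, mul_add, ih]; push_cast; ring

section Field

variable {K : Type*} [Field K]

theorem one_sub_mul_sum_range_natCast_mul_pow_of_pow_eq_one {x : K} {n : ℕ}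
    (hxn : x ^ n = 1) (hx : x ≠ 1) :
    (1 - x) * ∑ j ∈ range n, (j : K) * x ^ j = -n := by
  rw [one_sub_mul_sum_range_natCast_mul_pow, geom_sum_eq hx, hxn, sub_self, zero_div]
  ring

theorem inv_one_sub_mul_one_sub_inv_eq_sum_mul_sum_div {x : K} {n : ℕ}
    (hn : (n : K) ≠ 0) (hxn : x ^ n = 1) (hx : x ≠ 1) :
    ((1 - x) * (1 - x⁻¹))⁻¹ =
      (∑ i ∈ range n, (i : K) * x ^ i) * (∑ j ∈ range n, (j : K) * x⁻¹ ^ j) / n ^ 2 := by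
  have h := one_sub_mul_sum_range_natCast_mul_pow_of_pow_eq_one hxn hx
  have h' := one_sub_mul_sum_range_natCast_mul_pow_of_pow_eq_one
    (by rw [inv_pow, hxn, inv_one]) (inv_ne_one.mpr hx)
  have hprod : (1 - x) * (1 - x⁻¹) *
      ((∑ i ∈ range n, (i : K) * x ^ i) * (∑ j ∈ range n, (j : K) * x⁻¹ ^ j)) = n ^ 2 := by
    linear_combination ((1 - x⁻¹) * ∑ j ∈ range n, (j : K) * x⁻¹ ^ j) * h - n * h'
  have hn2 : (n : K) ^ 2 ≠ 0 := pow_ne_zero 2 hn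
  rw [eq_div_iff hn2, ← hprod, ← mul_assoc,
    inv_mul_cancel₀ (left_ne_zero_of_mul (hprod ▸ hn2)), one_mul]

namespace IsPrimitiveRoot

variable {ζ : K} {n : ℕ}

theorem geom_sum_pow_div_pow (hζ : IsPrimitiveRoot ζ n) {i j : ℕ} (hi : i < n) (hj : j < n) :
    ∑ k ∈ range n, (ζ ^ i / ζ ^ j) ^ k = if i = j then (n : K) else 0 := by
  have hζj : ζ ^ j ≠ 0 := pow_ne_zero _ (hζ.ne_zero (by omega))
  split_ifs with hij
  · simp [hij, div_self hζj]
  · have hne : ζ ^ i / ζ ^ j ≠ 1 := fun h =>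
      hij (hζ.pow_inj hi hj ((div_eq_one_iff_eq hζj).mp h))
    rw [geom_sum_eq hne, div_pow, ← pow_mul, ← pow_mul, mul_comm i, mul_comm j, pow_mul, pow_mul,
      hζ.pow_eq_one, one_pow, one_pow, div_one, sub_self, zero_div]

theorem sum_range_sum_mul_sum_inv (hζ : IsPrimitiveRoot ζ n) (a b : ℕ → K) :
    ∑ k ∈ range n, (∑ i ∈ range n, a i * (ζ ^ k) ^ i) * ∑ j ∈ range n, b j * ((ζ ^ k)⁻¹) ^ j
      = n * ∑ i ∈ range n, a i * b i := by
  have hterm (i j k : ℕ) :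
      a i * (ζ ^ k) ^ i * (b j * ((ζ ^ k)⁻¹) ^ j) = a i * b j * (ζ ^ i / ζ ^ j) ^ k := by
    rw [inv_pow, div_pow, ← pow_mul, ← pow_mul, ← pow_mul, ← pow_mul, mul_comm k i, mul_comm k j]
    ring
  calc _ = ∑ k ∈ range n, ∑ i ∈ range n, ∑ j ∈ range n, a i * b j * (ζ ^ i / ζ ^ j) ^ k := by
        simp_rw [sum_mul_sum, hterm]
    _ = ∑ i ∈ range n, ∑ j ∈ range n, a i * b j * ∑ k ∈ range n, (ζ ^ i / ζ ^ j) ^ k := by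
        rw [sum_comm]
        refine sum_congr rfl fun i _ => ?_
        rw [sum_comm]
        simp_rw [mul_sum]
    _ = ∑ i ∈ range n, ∑ j ∈ range n, a i * b j * if i = j then (n : K) else 0 :=
        sum_congr rfl fun i hi => sum_congr rfl fun j hj => by
          rw [hζ.geom_sum_pow_div_pow (mem_range.mp hi) (mem_range.mp hj)]
    _ = n * ∑ i ∈ range n, a i * b i := by
        rw [mul_sum]
        exact sum_congr rfl fun i hi => by simp [mem_range.mp hi, mul_comm]

theorem twelve_mul_sum_Ico_inv_one_sub_pow_mul_one_sub_inv_pow [NeZero n]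
    (hζ : IsPrimitiveRoot ζ n) :
    12 * ∑ k ∈ Ico 1 n, ((1 - ζ ^ k) * (1 - (ζ ^ k)⁻¹))⁻¹ = (n : K) ^ 2 - 1 := by
  have hn : (n : K) ≠ 0 := hζ.neZero'.out
  have hterm (k : ℕ) (hk : k ∈ Ico 1 n) : ((1 - ζ ^ k) * (1 - (ζ ^ k)⁻¹))⁻¹ =
      (∑ i ∈ range n, (i : K) * (ζ ^ k) ^ i) * (∑ j ∈ range n, (j : K) * ((ζ ^ k)⁻¹) ^ j) /
        n ^ 2 := by
    obtain ⟨hk1, hkn⟩ := mem_Ico.mp hk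
    exact inv_one_sub_mul_one_sub_inv_eq_sum_mul_sum_div hn
      (by rw [pow_right_comm, hζ.pow_eq_one, one_pow]) (hζ.pow_ne_one_of_pos_of_lt (by omega) hkn)
  have hparseval := hζ.sum_range_sum_mul_sum_inv (fun j => (j : K)) (fun j => (j : K))
  rw [sum_range_eq_add_Ico _ (Nat.pos_of_ne_zero (NeZero.ne n))] at hparseval
  simp only [pow_zero, inv_one, one_pow, mul_one, ← sq] at hparseval
  have hsum := sum_range_natCast_mul_two (R := K) n
  have hsum_sq := sum_range_natCast_sq_mul_six (R := K) n
  rw [sum_congr rfl hterm, ← sum_div, mul_div_assoc', div_eq_iff (pow_ne_zero 2 hn)]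
  linear_combination 12 * hparseval + 2 * n * hsum_sq -
    3 * ((∑ j ∈ range n, (j : K)) * 2 + n * (n - 1)) * hsum

end IsPrimitiveRoot

end Field

open Complex ComplexConjugate in
theorem Complex.one_sub_exp_mul_one_sub_inv_exp (θ : ℝ) :
    (1 - exp (I * (2 * θ : ℝ))) * (1 - (exp (I * (2 * θ : ℝ)))⁻¹) =
      ((4 * Real.sin θ ^ 2 : ℝ) : ℂ) := by
  have hconj : (exp (I * (2 * θ : ℝ)))⁻¹ = conj (exp (I * (2 * θ : ℝ))) := by
    rw [← exp_conj, ← exp_neg, map_mul, conj_I, conj_ofReal, neg_mul]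
  rw [hconj, ← map_one (starRingEnd ℂ), ← map_sub, map_one, mul_conj', norm_sub_rev,
    norm_exp_I_mul_ofReal_sub_one, mul_div_cancel_left₀ θ two_ne_zero, Real.norm_eq_abs,
    ← ofReal_pow, sq_abs]
  push_cast
  ring

theorem sum_inv_sin_sq (n : ℕ) (hn : 2 ≤ n) :
    ∑ k ∈ Finset.Ico 1 n, 1 / Real.sin (Real.pi * k / n) ^ 2 = ((n : ℝ) ^ 2 - 1) / 3 := by
  have : NeZero n := ⟨by omega⟩
  have hpow (k : ℕ) : Complex.exp (2 * π * Complex.I / n) ^ k =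
      Complex.exp (Complex.I * (2 * (π * k / n) : ℝ)) := by
    rw [← Complex.exp_nat_mul]
    push_cast
    ring_nf
  have key := IsPrimitiveRoot.twelve_mul_sum_Ico_inv_one_sub_pow_mul_one_sub_inv_pow
    (Complex.isPrimitiveRoot_exp n (NeZero.ne n))
  simp only [hpow, Complex.one_sub_exp_mul_one_sub_inv_exp, ← Complex.ofReal_inv,
    ← Complex.ofReal_sum] at key
  have hreal : 12 * ∑ k ∈ Ico 1 n, (4 * Real.sin (π * k / n) ^ 2)⁻¹ = (n : ℝ) ^ 2 - 1 := by
    exact_mod_cast key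
  have hquarter : ∑ k ∈ Ico 1 n, 1 / Real.sin (π * k / n) ^ 2
      = 4 * ∑ k ∈ Ico 1 n, (4 * Real.sin (π * k / n) ^ 2)⁻¹ := by
    rw [mul_sum]
    refine sum_congr rfl fun k _ => ?_
    rw [mul_inv, ← mul_assoc, mul_inv_cancel₀ four_ne_zero, one_mul, one_div]
  rw [hquarter]
  linarith
end

section
/- For integers m, n with 0 < m < n, the sum over k = 1 to n−1 of sin^{2m}(πk/n) equals (n/4^m) · binom(2m, m). -/
/-!
With `w = exp (x * I)` one has `sin x = (w - w⁻¹) / (2 * I)`, so the binomial theorem writes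
`sin x ^ (2 * m)` as `(-4)⁻ᵐ ∑ⱼ (-1)ʲ (2m choose j) (w²)^(m - j)`. For `x = π k / n`, `w² = ζᵏ`
with `ζ = exp (2π I / n)` a primitive `n`-th root of unity, and summing over `k < n` annihilates
every term with `n ∤ m - j`. Since `|m - j| ≤ m < n`, only the constant term `j = m` survives, and
it contributes `n (2m choose m) / 4ᵐ`. The summand `k = 0` vanishes because `m > 0`.
-/

open Real Finset

theorem IsPrimitiveRoot.sum_range_pow_zpow {K : Type*} [Field K] {ζ : K} {n : ℕ}
    (hζ : IsPrimitiveRoot ζ n) (d : ℤ) :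
    ∑ k ∈ range n, (ζ ^ k) ^ d = if (n : ℤ) ∣ d then (n : K) else 0 := by
  have hcomm : ∀ k : ℕ, (ζ ^ k) ^ d = (ζ ^ d) ^ k := fun k => by
    rw [← zpow_natCast, ← zpow_natCast (ζ ^ d), ← zpow_mul, ← zpow_mul, mul_comm]
  simp_rw [hcomm]
  split_ifs with hd
  · simp [(hζ.zpow_eq_one_iff_dvd d).mpr hd]
  · have hpow : (ζ ^ d) ^ n = 1 := by rw [← hcomm, hζ.pow_eq_one, one_zpow]
    rw [geom_sum_eq (mt (hζ.zpow_eq_one_iff_dvd d).mp hd), hpow, sub_self, zero_div]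

theorem sub_inv_pow_eq_sum {K : Type*} [Field K] {w : K} (hw : w ≠ 0) (N : ℕ) :
    (w - w⁻¹) ^ N =
      ∑ j ∈ range (N + 1), (-1) ^ j * (N.choose j : K) * w ^ ((N : ℤ) - 2 * j) := by
  rw [sub_eq_neg_add, add_pow]
  refine sum_congr rfl fun j hj => ?_
  have hjN : j ≤ N := Nat.lt_succ_iff.mp (mem_range.mp hj)
  rw [show (N : ℤ) - 2 * j = ((N - j : ℕ) : ℤ) - j by push_cast [Nat.cast_sub hjN]; ring,
    zpow_sub₀ hw, zpow_natCast, zpow_natCast, neg_pow, inv_pow]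
  ring

namespace Complex

theorem sin_eq_exp_sub_inv_div (x : ℂ) :
    sin x = (exp (x * I) - (exp (x * I))⁻¹) / (2 * I) := by
  rw [← exp_neg, ← neg_mul, eq_div_iff (mul_ne_zero two_ne_zero I_ne_zero)]
  linear_combination I * two_sin x + (exp (-x * I) - exp (x * I)) * I_sq

theorem sin_pow_two_mul_eq_sum (x : ℂ) (m : ℕ) :
    sin x ^ (2 * m) = ((-4) ^ m)⁻¹ * ∑ j ∈ range (2 * m + 1),
      (-1) ^ j * ((2 * m).choose j : ℂ) * (exp (x * I) ^ 2) ^ ((m : ℤ) - j) := by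
  have h2I : (2 * I) ^ (2 * m) = (-4) ^ m := by
    rw [pow_mul, mul_pow, I_sq]
    norm_num
  rw [sin_eq_exp_sub_inv_div, div_pow, sub_inv_pow_eq_sum (exp_ne_zero _), h2I, div_eq_inv_mul]
  refine congrArg _ (sum_congr rfl fun j _ => ?_)
  rw [← zpow_natCast _ 2, ← zpow_mul]
  push_cast
  ring_nf

end Complex

theorem sum_range_sin_pi_mul_div_pow {m n : ℕ} (hmn : m < n) :
    ∑ k ∈ range n, Real.sin (π * k / n) ^ (2 * m) = (n / 4 ^ m) * (2 * m).choose m := by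
  apply Complex.ofReal_injective
  push_cast
  set ζ := Complex.exp (2 * π * Complex.I / n)
  have hζ : IsPrimitiveRoot ζ n := Complex.isPrimitiveRoot_exp n (by omega)
  have hsq : ∀ k : ℕ, Complex.exp (π * k / n * Complex.I) ^ 2 = ζ ^ k := fun k => by
    rw [← Complex.exp_nat_mul, ← Complex.exp_nat_mul]
    congr 1
    ring
  have hdvd : ∀ j ∈ range (2 * m + 1), ((n : ℤ) ∣ (m : ℤ) - j ↔ m = j) := fun j hj => by
    have hj : j < 2 * m + 1 := mem_range.mp hj
    refine ⟨fun h => ?_, fun h => by simp [h]⟩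
    have := Int.eq_zero_of_abs_lt_dvd h (abs_sub_lt_iff.mpr ⟨by omega, by omega⟩)
    omega
  simp_rw [Complex.sin_pow_two_mul_eq_sum, hsq, ← mul_sum]
  rw [sum_comm]
  simp_rw [← mul_sum, hζ.sum_range_pow_zpow]
  rw [sum_congr rfl fun j hj => by rw [if_congr (hdvd j hj) rfl rfl, mul_ite, mul_zero],
    sum_ite_eq, if_pos (mem_range.mpr (by omega))]
  have hsign : ((-1 : ℂ) ^ m)⁻¹ * (-1) ^ m = 1 := inv_mul_cancel₀ (pow_ne_zero _ (by norm_num))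
  rw [neg_pow, mul_inv, div_eq_mul_inv]
  linear_combination ((4 : ℂ) ^ m)⁻¹ * ((2 * m).choose m : ℂ) * n * hsign

theorem sum_sin_pow (m n : ℕ) (hm : 0 < m) (hmn : m < n) :
    ∑ k ∈ Finset.Ico 1 n, Real.sin (Real.pi * k / n) ^ (2 * m) =
      ((n : ℝ) / 4 ^ m) * Nat.choose (2 * m) m := by
  rw [← sum_range_sin_pi_mul_div_pow hmn, range_eq_Ico,
    sum_eq_sum_Ico_succ_bot (show 0 < n by omega), Nat.cast_zero, mul_zero, zero_div,
    Real.sin_zero, zero_pow (by omega), zero_add]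
end
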